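/- arXiv:1611.06138 — 2 statements merged into one kernel-verified Lean document; each statement's English description precedes it below -/
import Mathlib

section
/- β-dual characterization (sufficiency direction): let a = (a_k) be a real sequence such that Σ_k |a_k/k − a_{k+1}/(k+1)| < ∞ and a_n/n → 0 as n → ∞. Then for every x ∈ c₀(Ω) (i.e., with y_n = Σ_{k=1}^n k·x_k → 0), the series Σ_k a_k x_k converges. -/
/-!
Abel summation with `y = Ωx` gives
`∑_{k=1}^n aₖxₖ = ∑_{k<n} (aₖ/k − aₖ₊₁/(k+1)) yₖ + (aₙ/n) yₙ`.
Since `y` is null it is bounded, so the first sum converges absolutely, and the last term tends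
to `0`.
-/

open Filter Finset Topology

/-- The Ω-transform: `(Ωx)ₙ = ∑_{k=1}^n k·xₖ`. -/
noncomputable def OmegaT (x : ℕ → ℝ) (n : ℕ) : ℝ := ∑ k ∈ Finset.Icc 1 n, (k : ℝ) * x k

lemma omegaT_succ (x : ℕ → ℝ) (n : ℕ) :
    OmegaT x (n + 1) = OmegaT x n + ((n : ℝ) + 1) * x (n + 1) := by
  rw [OmegaT, OmegaT, sum_Icc_succ_top (by omega)]
  push_cast
  ring

lemma sum_Icc_mul_eq_sum_range_mul_omegaT_add (a x : ℕ → ℝ) (n : ℕ) :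
    ∑ k ∈ Icc 1 n, a k * x k =
      ∑ k ∈ range n, (a k / k - a (k + 1) / (k + 1)) * OmegaT x k + a n / n * OmegaT x n := by
  induction n with
  | zero => simp [OmegaT]
  | succ n ih =>
    rw [sum_Icc_succ_top (by omega), ih, sum_range_succ, omegaT_succ]
    have hn : (n : ℝ) + 1 ≠ 0 := by positivity
    push_cast
    field_simp
    ring

theorem Summable.mul_of_bddAbove_norm {ι R : Type*} [NormedRing R] [CompleteSpace R]
    {b y : ι → R} (hb : Summable fun i => ‖b i‖) (hy : BddAbove (Set.range fun i => ‖y i‖)) :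
    Summable fun i => b i * y i := by
  obtain ⟨C, hC⟩ := hy
  refine .of_norm_bounded (hb.mul_right C) fun i => (norm_mul_le _ _).trans ?_
  exact mul_le_mul_of_nonneg_left (hC ⟨i, rfl⟩) (norm_nonneg _)

/-- β-dual of `c₀(Ω)`, sufficiency: if `∑ₖ |aₖ/k − aₖ₊₁/(k+1)| < ∞` and `aₙ/n → 0`,
then `∑ₖ aₖxₖ` converges for every `x ∈ c₀(Ω)`. -/
theorem beta_dual_sufficiency (a : ℕ → ℝ)
    (hsum : Summable fun k => |a k / k - a (k + 1) / (k + 1)|)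
    (hlim : Tendsto (fun n => a n / n) atTop (𝓝 0))
    (x : ℕ → ℝ) (hx : Tendsto (OmegaT x) atTop (𝓝 0)) :
    ∃ L : ℝ, Tendsto (fun n => ∑ k ∈ Finset.Icc 1 n, a k * x k) atTop (𝓝 L) := by
  have hmain : Summable fun k => (a k / k - a (k + 1) / (k + 1)) * OmegaT x k :=
    .mul_of_bddAbove_norm (by simpa only [Real.norm_eq_abs] using hsum) hx.norm.bddAbove_range
  have hlast : Tendsto (fun n => a n / n * OmegaT x n) atTop (𝓝 0) := by
    simpa using hlim.mul hx
  refine ⟨∑' k, (a k / k - a (k + 1) / (k + 1)) * OmegaT x k, ?_⟩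
  simpa only [sum_Icc_mul_eq_sum_range_mul_omegaT_add, add_zero] using
    hmain.hasSum.tendsto_sum_nat.add hlast
end

section
/- γ-dual characterization (sufficiency direction): let a = (a_k) be a real sequence with sup_n Σ_{k=1}^{n−1} |a_k/k − a_{k+1}/(k+1)| + |a_n/n| < ∞. Then for every x ∈ ℓ∞(Ω) (i.e., sup_n |Σ_{k=1}^n k·x_k| < ∞), the partial sums Σ_{k=1}^n a_k x_k form a bounded sequence. -/
open Filter Finset Topology

lemma abel_id (a x : ℕ → ℝ) (m : ℕ) :
    ∑ k ∈ Finset.Icc 1 (m + 1), a k * x k =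
      (∑ k ∈ Finset.Icc 1 m, OmegaT x k * (a k / k - a (k + 1) / (k + 1)))
        + OmegaT x (m + 1) * (a (m + 1) / (m + 1)) := by
  induction m with
  | zero =>
      simp [OmegaT]
      ring
  | succ m ih =>
      have h1 : ∑ k ∈ Finset.Icc 1 (m + 2), a k * x k =
          (∑ k ∈ Finset.Icc 1 (m + 1), a k * x k) + a (m + 2) * x (m + 2) :=
        Finset.sum_Icc_succ_top (by omega) _
      have h2 : ∑ k ∈ Finset.Icc 1 (m + 1),
            OmegaT x k * (a k / k - a (k + 1) / (k + 1)) =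
          (∑ k ∈ Finset.Icc 1 m, OmegaT x k * (a k / k - a (k + 1) / (k + 1)))
            + OmegaT x (m + 1) * (a (m + 1) / (m + 1) - a (m + 2) / (m + 2)) := by
        rw [Finset.sum_Icc_succ_top (by omega : 1 ≤ m + 1)]
        push_cast
        ring
      have h3 : OmegaT x (m + 2) = OmegaT x (m + 1) + (m + 2 : ℝ) * x (m + 2) := by
        unfold OmegaT
        rw [Finset.sum_Icc_succ_top (by omega : 1 ≤ m + 2)]
        push_cast
        ring
      have hne : ((m : ℝ) + 2) ≠ 0 := by positivity
      rw [h1, ih, h2, h3]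
      push_cast
      field_simp
      ring

/-- γ-dual of `ℓ∞(Ω)`, sufficiency: if
`supₙ (∑_{k=1}^{n−1} |aₖ/k − aₖ₊₁/(k+1)| + |aₙ/n|) < ∞`, then for every
`x ∈ ℓ∞(Ω)` the partial sums `∑_{k=1}^n aₖxₖ` form a bounded sequence. -/
theorem gamma_dual_sufficiency (a : ℕ → ℝ)
    (ha : ∃ C : ℝ, ∀ n : ℕ, 1 ≤ n →
      (∑ k ∈ Finset.Icc 1 (n - 1), |a k / k - a (k + 1) / (k + 1)|) + |a n / n| ≤ C)
    (x : ℕ → ℝ) (hx : ∃ C : ℝ, ∀ n : ℕ, |OmegaT x n| ≤ C) :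
    ∃ M : ℝ, ∀ n : ℕ, |∑ k ∈ Finset.Icc 1 n, a k * x k| ≤ M := by
  obtain ⟨Ca, hCa⟩ := ha
  obtain ⟨Cx, hCx⟩ := hx
  have hCx0 : 0 ≤ Cx := le_trans (abs_nonneg _) (hCx 0)
  have hCa0 : 0 ≤ Ca := le_trans (by positivity) (hCa 1 le_rfl)
  refine ⟨Cx * Ca, fun n => ?_⟩
  rcases n with _ | m
  · simpa using mul_nonneg hCx0 hCa0
  · rw [abel_id]
    calc |(∑ k ∈ Finset.Icc 1 m, OmegaT x k * (a k / k - a (k + 1) / (k + 1)))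
          + OmegaT x (m + 1) * (a (m + 1) / (m + 1))|
        ≤ (∑ k ∈ Finset.Icc 1 m, |OmegaT x k * (a k / k - a (k + 1) / (k + 1))|)
          + |OmegaT x (m + 1) * (a (m + 1) / (m + 1))| := by
          exact le_trans (abs_add_le _ _) (by gcongr; exact Finset.abs_sum_le_sum_abs _ _)
      _ ≤ (∑ k ∈ Finset.Icc 1 m, Cx * |a k / k - a (k + 1) / (k + 1)|)
          + Cx * |a (m + 1) / (m + 1)| := by
          gcongr with k hk
          · rw [abs_mul]; exact mul_le_mul_of_nonneg_right (hCx k) (abs_nonneg _)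
          · rw [abs_mul]; exact mul_le_mul_of_nonneg_right (hCx _) (abs_nonneg _)
      _ = Cx * ((∑ k ∈ Finset.Icc 1 m, |a k / k - a (k + 1) / (k + 1)|)
          + |a (m + 1) / (m + 1)|) := by rw [← Finset.mul_sum]; ring
      _ ≤ Cx * Ca := by
          apply mul_le_mul_of_nonneg_left _ hCx0
          have := hCa (m + 1) (by omega)
          simpa using this
end
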